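/- For n ∈ ℕ and k ∈ [2..⌊n/2⌋], any search point y with |y|₁ ∈ [1..k-1] ∪ [n-k+1..n-1] is strictly dominated (with respect to OneJumpZeroJump_{n,k}) by every search point z with |z|₁ ∈ [k..n-k]. In particular, f₁(y) < f₁(z) and f₂(y) < f₂(z). -/

import Mathlib

/-- Number of ones in a bit-string. -/
def ones {n : ℕ} (x : Fin n → Bool) : ℕ := (Finset.univ.filter (fun i => x i = true)).card

/-- Number of zeros in a bit-string. -/
def zeros {n : ℕ} (x : Fin n → Bool) : ℕ := n - ones x

/-- First objective of OneJumpZeroJump. -/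
def f1 (n k : ℕ) (x : Fin n → Bool) : ℕ :=
  if ones x ≤ n - k ∨ ones x = n then k + ones x else n - ones x

/-- Second objective of OneJumpZeroJump. -/
def f2 (n k : ℕ) (x : Fin n → Bool) : ℕ :=
  if zeros x ≤ n - k ∨ zeros x = n then k + zeros x else n - zeros x

/-- `x` strictly dominates `y`. -/
def dominates (n k : ℕ) (x y : Fin n → Bool) : Prop :=
  f1 n k y ≤ f1 n k x ∧ f2 n k y ≤ f2 n k x ∧ (f1 n k y < f1 n k x ∨ f2 n k y < f2 n k x)

/-- `x` is Pareto optimal: no point dominates it. -/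
def paretoOptimal (n k : ℕ) (x : Fin n → Bool) : Prop :=
  ¬ ∃ y : Fin n → Bool, dominates n k y x

/-! The first objective grows with `ones x` as long as `ones x` stays outside the gap
`(n - k, n)`, where it drops to at most `k - 1`, below `f₁` on the middle range `[k, n - k]`.
Complementing every bit swaps ones with zeros, hence `f₁` with `f₂`, and maps the set of
gap points onto itself, so the bound for `f₂` is the one for `f₁` applied to complements. -/

theorem ones_le {n : ℕ} (x : Fin n → Bool) : ones x ≤ n :=
  (Finset.card_le_univ _).trans_eq (Fintype.card_fin n)

theorem ones_compl {n : ℕ} (x : Fin n → Bool) : ones xᶜ = zeros x := by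
  refine eq_tsub_of_add_eq ?_
  simpa [ones, add_comm] using
    Finset.card_filter_add_card_filter_not (s := Finset.univ) (fun i => x i = true)

theorem f2_eq_f1_compl (n k : ℕ) (x : Fin n → Bool) : f2 n k x = f1 n k xᶜ := by
  rw [f1, f2, ones_compl]

theorem f1_of_ones_le (n k : ℕ) {x : Fin n → Bool} (h : ones x ≤ n - k) :
    f1 n k x = k + ones x :=
  if_pos (Or.inl h)

theorem f1_of_mem_gap (n k : ℕ) {x : Fin n → Bool} (hlo : n - k < ones x) (hhi : ones x < n) :
    f1 n k x = n - ones x :=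
  if_neg (by omega)

theorem f1_lt_f1_of_gap (n k : ℕ) {y z : Fin n → Bool}
    (hy : (1 ≤ ones y ∧ ones y ≤ k - 1) ∨ (n - k + 1 ≤ ones y ∧ ones y ≤ n - 1))
    (hz : k ≤ ones z ∧ ones z ≤ n - k) :
    f1 n k y < f1 n k z := by
  rw [f1_of_ones_le n k hz.2]
  rcases hy with hlow | hhigh
  · rw [f1_of_ones_le n k (by omega)]
    omega
  · rw [f1_of_mem_gap n k (by omega) (by omega)]
    omega

theorem gap_points_strictly_dominated_general (n k : ℕ)
    (y z : Fin n → Bool)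
    (hy : (1 ≤ ones y ∧ ones y ≤ k - 1) ∨ (n - k + 1 ≤ ones y ∧ ones y ≤ n - 1))
    (hz : k ≤ ones z ∧ ones z ≤ n - k) :
    f1 n k y < f1 n k z ∧ f2 n k y < f2 n k z := by
  refine ⟨f1_lt_f1_of_gap n k hy hz, ?_⟩
  have hyn := ones_le y
  have hzn := ones_le z
  rw [f2_eq_f1_compl, f2_eq_f1_compl]
  apply f1_lt_f1_of_gap n k <;> rw [ones_compl, zeros] <;> omega

theorem gap_points_strictly_dominated (n k : ℕ) (hk : 2 ≤ k) (h2k : 2 * k ≤ n)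
    (y z : Fin n → Bool)
    (hy : (1 ≤ ones y ∧ ones y ≤ k - 1) ∨ (n - k + 1 ≤ ones y ∧ ones y ≤ n - 1))
    (hz : k ≤ ones z ∧ ones z ≤ n - k) :
    f1 n k y < f1 n k z ∧ f2 n k y < f2 n k z :=
  gap_points_strictly_dominated_general n k y z hy hz
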